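/- For all integers i, j, k with i − j ≡ 1 (mod 3) and k even, the following identity holds in F: Z(i−1,j+1,k+1) · Z(i,j+1,k−1) = Z(i−1,j+2,k) · Z(i,j,k) + Z(i−1,j+1,k) · Z(i,j+1,k). -/

import Mathlib

noncomputable section

open MvPolynomial

/-- The field `F = ℚ(x₁,…,x₆)` of rational functions in six indeterminates over `ℚ`. -/
abbrev F : Type := FractionRing (MvPolynomial (Fin 6) ℚ)

/-- The indeterminate `x_{r+1}` as an element of `F` (so `x 0 = x₁, …, x 5 = x₆`). -/
def x (r : Fin 6) : F := algebraMap (MvPolynomial (Fin 6) ℚ) F (X r)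

/-- `A = (x₃x₅+x₄x₆)/(x₁x₂)` -/
def A : F := (x 2 * x 4 + x 3 * x 5) / (x 0 * x 1)

/-- `B = (x₁x₆+x₂x₅)/(x₃x₄)` -/
def B : F := (x 0 * x 5 + x 1 * x 4) / (x 2 * x 3)

/-- `C = (x₁x₃+x₂x₄)/(x₅x₆)` -/
def C : F := (x 0 * x 2 + x 1 * x 3) / (x 4 * x 5)

/-- `D = (x₁x₃x₆+x₂x₃x₅+x₂x₄x₆)/(x₁x₄x₅)` -/
def D : F := (x 0 * x 2 * x 5 + x 1 * x 2 * x 4 + x 1 * x 3 * x 5) / (x 0 * x 3 * x 4)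

/-- `E = (x₂x₄x₅+x₁x₃x₅+x₁x₄x₆)/(x₂x₃x₆)` -/
def E : F := (x 1 * x 3 * x 4 + x 0 * x 2 * x 4 + x 0 * x 3 * x 5) / (x 1 * x 2 * x 5)

/-- `a(i,j) = i² + ij + j² + 1 + i + 2j` -/
def a (i j : ℤ) : ℤ := i^2 + i*j + j^2 + 1 + i + 2*j

/-- `b(i,j) = i² + ij + j² + 1 + 2i + j` -/
def b (i j : ℤ) : ℤ := i^2 + i*j + j^2 + 1 + 2*i + j

/-- `c(i,j) = i² + ij + j² + 1` -/
def c (i j : ℤ) : ℤ := i^2 + i*j + j^2 + 1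

/-- The initial cluster variable `x_{r(i,j,k)}` determined by `2(i−j)+3k mod 6`:
`r = 1` if `≡ 5`, `r = 2` if `≡ 2`, `r = 3` if `≡ 4`, `r = 4` if `≡ 1`,
`r = 5` if `≡ 3`, and `r = 6` if `≡ 0 (mod 6)`. -/
def xr (i j k : ℤ) : F :=
  if (2*(i-j) + 3*k) % 6 = 5 then x 0
  else if (2*(i-j) + 3*k) % 6 = 2 then x 1
  else if (2*(i-j) + 3*k) % 6 = 4 then x 2
  else if (2*(i-j) + 3*k) % 6 = 1 then x 3
  else if (2*(i-j) + 3*k) % 6 = 3 then x 4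
  else x 5

/-- `Z(i,j,k) = x_{r(i,j,k)} · A^{⌊a(i,j)/3⌋} · B^{⌊b(i,j)/3⌋} · C^{⌊c(i,j)/3⌋} ·
D^{⌊(k−1)²/4⌋} · E^{⌊k²/4⌋}`.  (Note `Int` division by a positive integer is floor
division.) -/
def Z (i j k : ℤ) : F :=
  xr i j k * A ^ (a i j / 3) * B ^ (b i j / 3) * C ^ (c i j / 3)
    * D ^ ((k-1)^2 / 4) * E ^ (k^2 / 4)

/-! Each `Z i j k` is an initial variable `xr i j k` times a Laurent monomial in `A, B, C, D, E`.
For `i - j ≡ 1 (mod 3)` and `k` even the monomials of the three products agree, except that the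
left side carries one more factor `D` and the first summand on the right one more factor `A`, while
the initial variables multiply to `x₄x₅`, `x₂²` and `x₃x₆`. Cancelling the common monomial leaves
`x₄x₅ D = x₂² A + x₃x₆`, which is the definition of `D`. -/

lemma algebraMap_ne_zero_of_eval_ne_zero {σ R K : Type*} [CommRing R] [CommRing K]
    [Algebra (MvPolynomial σ R) K] [IsFractionRing (MvPolynomial σ R) K]
    {p : MvPolynomial σ R} (v : σ → R) (hp : eval v p ≠ 0) : algebraMap _ K p ≠ 0 := by
  rw [Ne, IsFractionRing.to_map_eq_zero_iff]
  rintro rfl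
  exact hp (map_zero _)

lemma x_ne_zero (r : Fin 6) : x r ≠ 0 :=
  algebraMap_ne_zero_of_eval_ne_zero 1 (by simp)

lemma algebraMap_div_ne_zero {σ R K : Type*} [CommRing R] [Field K]
    [Algebra (MvPolynomial σ R) K] [IsFractionRing (MvPolynomial σ R) K]
    {p q : MvPolynomial σ R} (v : σ → R) (hp : eval v p ≠ 0) (hq : eval v q ≠ 0) :
    algebraMap _ K p / algebraMap _ K q ≠ 0 :=
  div_ne_zero (algebraMap_ne_zero_of_eval_ne_zero v hp) (algebraMap_ne_zero_of_eval_ne_zero v hq)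

lemma A_ne_zero : A ≠ 0 := by
  simp only [A, x, ← map_mul, ← map_add]
  exact algebraMap_div_ne_zero 1 (by norm_num) (by norm_num)

lemma B_ne_zero : B ≠ 0 := by
  simp only [B, x, ← map_mul, ← map_add]
  exact algebraMap_div_ne_zero 1 (by norm_num) (by norm_num)

lemma C_ne_zero : C ≠ 0 := by
  simp only [_root_.C, x, ← map_mul, ← map_add]
  exact algebraMap_div_ne_zero 1 (by norm_num) (by norm_num)

lemma D_ne_zero : D ≠ 0 := by
  simp only [D, x, ← map_mul, ← map_add]
  exact algebraMap_div_ne_zero 1 (by norm_num) (by norm_num)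

lemma E_ne_zero : E ≠ 0 := by
  simp only [E, x, ← map_mul, ← map_add]
  exact algebraMap_div_ne_zero 1 (by norm_num) (by norm_num)

lemma x3_mul_x4_mul_D : x 3 * x 4 * D = x 1 * x 1 * A + x 2 * x 5 := by
  have := x_ne_zero 0
  have := x_ne_zero 1
  have := x_ne_zero 3
  have := x_ne_zero 4
  simp only [A, D]
  field_simp
  ring

def monomialABCDE (α β γ δ ε : ℤ) : F := A ^ α * B ^ β * C ^ γ * D ^ δ * E ^ ε

lemma monomialABCDE_mul (α β γ δ ε α' β' γ' δ' ε' : ℤ) :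
    monomialABCDE α β γ δ ε * monomialABCDE α' β' γ' δ' ε'
      = monomialABCDE (α + α') (β + β') (γ + γ') (δ + δ') (ε + ε') := by
  simp only [monomialABCDE, zpow_add₀ A_ne_zero, zpow_add₀ B_ne_zero, zpow_add₀ C_ne_zero,
    zpow_add₀ D_ne_zero, zpow_add₀ E_ne_zero]
  ring

lemma x3_mul_x4_mul_monomialABCDE_D_succ (α β γ δ ε : ℤ) :
    x 3 * x 4 * monomialABCDE α β γ (δ + 1) ε
      = x 1 * x 1 * monomialABCDE (α + 1) β γ δ ε + x 2 * x 5 * monomialABCDE α β γ δ ε := by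
  simp only [monomialABCDE, zpow_add_one₀ A_ne_zero, zpow_add_one₀ D_ne_zero]
  linear_combination A ^ α * B ^ β * C ^ γ * D ^ δ * E ^ ε * x3_mul_x4_mul_D

lemma Z_eq_xr_mul_monomialABCDE (i j k : ℤ) :
    Z i j k = xr i j k * monomialABCDE (a i j / 3) (b i j / 3) (c i j / 3) ((k - 1) ^ 2 / 4)
      (k ^ 2 / 4) := by
  simp only [Z, monomialABCDE, mul_assoc]

-- `i² + ij + j² = (i - j)² + 3ij`
lemma a_modEq {i j e : ℤ} (h : i - j ≡ e [ZMOD 3]) : a i j ≡ e ^ 2 + e + 1 [ZMOD 3] :=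
  (Int.modEq_iff_dvd.mpr ⟨-(j * (i + 1)), by unfold a; ring⟩).trans ((h.pow 2).add h |>.add_right 1)

lemma b_modEq {i j e : ℤ} (h : i - j ≡ e [ZMOD 3]) : b i j ≡ e ^ 2 - e + 1 [ZMOD 3] :=
  (Int.modEq_iff_dvd.mpr ⟨-(i * (j + 1)), by unfold b; ring⟩).trans ((h.pow 2).sub h |>.add_right 1)

lemma c_modEq {i j e : ℤ} (h : i - j ≡ e [ZMOD 3]) : c i j ≡ e ^ 2 + 1 [ZMOD 3] :=
  (Int.modEq_iff_dvd.mpr ⟨-(i * j), by unfold c; ring⟩).trans ((h.pow 2).add_right 1)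

-- Both sums below differ by exactly `1`, so how their floors differ is decided by the residues
-- mod 3, which depend only on `i - j`.
lemma a_ediv_three_add {i j : ℤ} (h : (i - j) % 3 = 1) :
    a (i - 1) (j + 2) / 3 + a i j / 3 = a (i - 1) (j + 1) / 3 + a i (j + 1) / 3 + 1 := by
  have hsum : a (i - 1) (j + 2) + a i j = a (i - 1) (j + 1) + a i (j + 1) + 1 := by
    simp only [a]; ring
  have := a_modEq (e := 1) (i := i - 1) (j := j + 2) (by unfold Int.ModEq; omega)
  have := a_modEq (e := 1) (i := i) (j := j) (by unfold Int.ModEq; omega)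
  have := a_modEq (e := 2) (i := i - 1) (j := j + 1) (by unfold Int.ModEq; omega)
  have := a_modEq (e := 0) (i := i) (j := j + 1) (by unfold Int.ModEq; omega)
  unfold Int.ModEq at *
  omega

lemma b_ediv_three_add {i j : ℤ} (h : (i - j) % 3 = 1) :
    b (i - 1) (j + 2) / 3 + b i j / 3 = b (i - 1) (j + 1) / 3 + b i (j + 1) / 3 := by
  have hsum : b (i - 1) (j + 2) + b i j = b (i - 1) (j + 1) + b i (j + 1) + 1 := by
    simp only [b]; ring
  have := b_modEq (e := 1) (i := i - 1) (j := j + 2) (by unfold Int.ModEq; omega)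
  have := b_modEq (e := 1) (i := i) (j := j) (by unfold Int.ModEq; omega)
  have := b_modEq (e := 2) (i := i - 1) (j := j + 1) (by unfold Int.ModEq; omega)
  have := b_modEq (e := 0) (i := i) (j := j + 1) (by unfold Int.ModEq; omega)
  unfold Int.ModEq at *
  omega

lemma c_ediv_three_add {i j : ℤ} (h : (i - j) % 3 = 1) :
    c (i - 1) (j + 2) / 3 + c i j / 3 = c (i - 1) (j + 1) / 3 + c i (j + 1) / 3 := by
  have hsum : c (i - 1) (j + 2) + c i j = c (i - 1) (j + 1) + c i (j + 1) + 1 := by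
    simp only [c]; ring
  have := c_modEq (e := 1) (i := i - 1) (j := j + 2) (by unfold Int.ModEq; omega)
  have := c_modEq (e := 1) (i := i) (j := j) (by unfold Int.ModEq; omega)
  have := c_modEq (e := 2) (i := i - 1) (j := j + 1) (by unfold Int.ModEq; omega)
  have := c_modEq (e := 0) (i := i) (j := j + 1) (by unfold Int.ModEq; omega)
  unfold Int.ModEq at *
  omega

lemma sq_ediv_four_add_of_even {k : ℤ} (hk : Even k) :
    k ^ 2 / 4 + (k - 2) ^ 2 / 4 = (k - 1) ^ 2 / 4 + (k - 1) ^ 2 / 4 + 1 ∧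
      (k + 1) ^ 2 / 4 + (k - 1) ^ 2 / 4 = k ^ 2 / 4 + k ^ 2 / 4 := by
  obtain ⟨n, rfl⟩ := hk
  have : (n + n) ^ 2 = 4 * n ^ 2 := by ring
  have : (n + n - 2) ^ 2 = 4 * n ^ 2 - 8 * n + 4 := by ring
  have : (n + n - 1) ^ 2 = 4 * n ^ 2 - 4 * n + 1 := by ring
  have : (n + n + 1) ^ 2 = 4 * n ^ 2 + 4 * n + 1 := by ring
  omega

lemma xr_mul_xr {i j k : ℤ} (h3 : (i - j) % 3 = 1) (h2 : Even k) :
    xr (i - 1) (j + 1) (k + 1) * xr i (j + 1) (k - 1) = x 3 * x 4 ∧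
      xr (i - 1) (j + 2) k * xr i j k = x 1 * x 1 ∧
      xr (i - 1) (j + 1) k * xr i (j + 1) k = x 2 * x 5 := by
  obtain ⟨n, rfl⟩ := h2
  have r₁ : (2 * (i - 1 - (j + 1)) + 3 * (n + n + 1)) % 6 = 1 := by omega
  have r₂ : (2 * (i - (j + 1)) + 3 * (n + n - 1)) % 6 = 3 := by omega
  have r₃ : (2 * (i - 1 - (j + 2)) + 3 * (n + n)) % 6 = 2 := by omega
  have r₄ : (2 * (i - j) + 3 * (n + n)) % 6 = 2 := by omega
  have r₅ : (2 * (i - 1 - (j + 1)) + 3 * (n + n)) % 6 = 4 := by omega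
  have r₆ : (2 * (i - (j + 1)) + 3 * (n + n)) % 6 = 0 := by omega
  simp only [xr, r₁, r₂, r₃, r₄, r₅, r₆]
  norm_num

/-- For `i − j ≡ 1 (mod 3)` and `k` even:
`Z(i−1,j+1,k+1)·Z(i,j+1,k−1) = Z(i−1,j+2,k)·Z(i,j,k) + Z(i−1,j+1,k)·Z(i,j+1,k)`. -/
theorem stmt_15 (i j k : ℤ) (h3 : (i - j) % 3 = 1) (h2 : Even k) :
    Z (i-1) (j+1) (k+1) * Z i (j+1) (k-1)
      = Z (i-1) (j+2) k * Z i j k + Z (i-1) (j+1) k * Z i (j+1) k := by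
  obtain ⟨hxr₁, hxr₂, hxr₃⟩ := xr_mul_xr h3 h2
  obtain ⟨hD, hE⟩ := sq_ediv_four_add_of_even h2
  have hk : k - 1 - 1 = k - 2 := by ring
  simp only [Z_eq_xr_mul_monomialABCDE, mul_mul_mul_comm (xr _ _ _), monomialABCDE_mul,
    hxr₁, hxr₂, hxr₃, a_ediv_three_add h3, b_ediv_three_add h3, c_ediv_three_add h3,
    add_sub_cancel_right, hk, hD, hE]
  exact x3_mul_x4_mul_monomialABCDE_D_succ _ _ _ _ _
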